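/- arXiv:2302.08160 — 6 statements merged into one kernel-verified Lean document; each statement's English description precedes it below -/
import Mathlib

section
/- A feature i ∈ F is relevant for the explanation problem given by (κ, v) if and only if the variable s_i is essential for the sufficiency function σ, i.e., i belongs to some AXp if and only if there exist s, s' ∈ {0,1}^m differing only in coordinate i with σ(s) ≠ σ(s'). -/
/-- The set of points agreeing with `v` on all features in `S`. -/
def upsilon {m : ℕ} (v : Fin m → Bool) (S : Finset (Fin m)) : Set (Fin m → Bool) :=
  {x | ∀ i ∈ S, x i = v i}

/-- Weak abductive explanation: fixing the features in `S` to their values in `v`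
forces the prediction to remain `κ v`. -/
def WAXp {m : ℕ} (κ : (Fin m → Bool) → Bool) (v : Fin m → Bool) (S : Finset (Fin m)) : Prop :=
  ∀ x ∈ upsilon v S, κ x = κ v

/-- Abductive explanation: a subset-minimal weak AXp. -/
def AXp {m : ℕ} (κ : (Fin m → Bool) → Bool) (v : Fin m → Bool) (S : Finset (Fin m)) : Prop :=
  WAXp κ v S ∧ ∀ T ⊂ S, ¬ WAXp κ v T

/-- Weak contrastive explanation: freeing the features in `S` (fixing all others
to their values in `v`) allows the prediction to change. -/
def WCXp {m : ℕ} (κ : (Fin m → Bool) → Bool) (v : Fin m → Bool) (S : Finset (Fin m)) : Prop :=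
  ∃ x : Fin m → Bool, (∀ i ∉ S, x i = v i) ∧ κ x ≠ κ v

/-- Contrastive explanation: a subset-minimal weak CXp. -/
def CXp {m : ℕ} (κ : (Fin m → Bool) → Bool) (v : Fin m → Bool) (S : Finset (Fin m)) : Prop :=
  WCXp κ v S ∧ ∀ T ⊂ S, ¬ WCXp κ v T

/-- A feature is relevant if it belongs to some AXp. -/
def Relevant {m : ℕ} (κ : (Fin m → Bool) → Bool) (v : Fin m → Bool) (i : Fin m) : Prop :=
  ∃ S, AXp κ v S ∧ i ∈ S

/-- The sufficiency function `σ`: `σ s = true` iff fixing exactly the features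
selected by `s` to their values in `v` forces the prediction `κ v` everywhere. -/
def sigmaFn {m : ℕ} (κ : (Fin m → Bool) → Bool) (v : Fin m → Bool) (s : Fin m → Bool) : Bool :=
  decide (∀ x : Fin m → Bool, (∀ i : Fin m, s i = true → x i = v i) → κ x = κ v)

/-- Average value of the classifier over the points agreeing with `v` on `S`. -/
def phi {m : ℕ} (κ : (Fin m → Bool) → Bool) (v : Fin m → Bool) (S : Finset (Fin m)) : ℚ :=
  (1 / 2 ^ (m - S.card)) *
    ∑ x ∈ Finset.univ.filter (fun x : Fin m → Bool => ∀ i ∈ S, x i = v i),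
      (if κ x = true then (1 : ℚ) else 0)

/-- The Shapley value of feature `i` for the instance `(v, κ v)`. -/
def Sv {m : ℕ} (κ : (Fin m → Bool) → Bool) (v : Fin m → Bool) (i : Fin m) : ℚ :=
  ∑ S ∈ (Finset.univ.erase i).powerset,
    ((S.card.factorial : ℚ) * ((m - S.card - 1).factorial : ℚ) / (m.factorial : ℚ)) *
      (phi κ v (insert i S) - phi κ v S)

/-! Since `WAXp` is monotone, every weak AXp contains an AXp, so `i` is relevant iff some weak
AXp `S` stops being one when `i` is removed. Such an `S` and `S.erase i` are a pair of selectors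
differing only at `i` on which `σ` changes; conversely, if `σ s = 1` and `σ s' = 0` with `s`, `s'`
differing only at `i`, take `S = insert i {j | s j}`, since `S.erase i ⊆ {j | s' j}`. -/

variable {m : ℕ} {κ : (Fin m → Bool) → Bool} {v : Fin m → Bool}

lemma WAXp.mono {S T : Finset (Fin m)} (h : WAXp κ v S) (hST : S ⊆ T) : WAXp κ v T :=
  fun x hx => h x fun i hi => hx i (hST hi)

lemma WAXp.exists_axp_subset {S : Finset (Fin m)} (h : WAXp κ v S) :
    ∃ T ⊆ S, AXp κ v T := by
  obtain ⟨T, hTS, hT⟩ := (Set.toFinite {T | WAXp κ v T}).exists_le_minimal h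
  exact ⟨T, hTS, hT.prop, fun U hUT => hT.not_prop_of_lt hUT⟩

lemma relevant_iff_exists_waxp_not_waxp_erase {i : Fin m} :
    Relevant κ v i ↔ ∃ S, WAXp κ v S ∧ ¬ WAXp κ v (S.erase i) := by
  constructor
  · rintro ⟨S, ⟨hS, hmin⟩, hi⟩
    exact ⟨S, hS, hmin _ (Finset.erase_ssubset hi)⟩
  · rintro ⟨S, hS, hS_erase⟩
    obtain ⟨T, hTS, hT⟩ := hS.exists_axp_subset
    refine ⟨T, hT, by_contra fun hi => hS_erase (hT.1.mono ?_)⟩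
    exact fun j hj => Finset.mem_erase.mpr ⟨fun hji => hi (hji ▸ hj), hTS hj⟩

lemma sigmaFn_eq_true_iff {s : Fin m → Bool} :
    sigmaFn κ v s = true ↔ WAXp κ v (Finset.univ.filter (s · = true)) := by
  simp [sigmaFn, WAXp, upsilon]

lemma sigmaFn_mem_eq_true_iff {S : Finset (Fin m)} :
    sigmaFn κ v (· ∈ S) = true ↔ WAXp κ v S := by
  simp [sigmaFn, WAXp, upsilon]

lemma exists_waxp_not_waxp_erase_of_sigmaFn {i : Fin m} {s s' : Fin m → Bool}
    (hagree : ∀ j, j ≠ i → s j = s' j) (hs : sigmaFn κ v s = true)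
    (hs' : sigmaFn κ v s' = false) :
    ∃ S, WAXp κ v S ∧ ¬ WAXp κ v (S.erase i) := by
  refine ⟨insert i (Finset.univ.filter (s · = true)),
    (sigmaFn_eq_true_iff.mp hs).mono (Finset.subset_insert _ _), fun h => ?_⟩
  have hsub : (insert i (Finset.univ.filter (s · = true))).erase i ⊆
      Finset.univ.filter (s' · = true) := by
    intro j hj
    obtain ⟨hji, hj⟩ := Finset.mem_erase.mp hj
    simpa [hji, ← hagree j hji] using hj
  simpa [hs'] using sigmaFn_eq_true_iff.mpr (h.mono hsub)

theorem stmt5_general {m : ℕ} (κ : (Fin m → Bool) → Bool) (v : Fin m → Bool)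
    (i : Fin m) :
    Relevant κ v i ↔
      ∃ s s' : Fin m → Bool, (∀ j : Fin m, j ≠ i → s j = s' j) ∧
        sigmaFn κ v s ≠ sigmaFn κ v s' := by
  rw [relevant_iff_exists_waxp_not_waxp_erase]
  constructor
  · rintro ⟨S, hS, hS_erase⟩
    refine ⟨(· ∈ S), (· ∈ S.erase i), fun j hj => by simp [hj], ?_⟩
    rw [ne_eq, Bool.eq_iff_iff, sigmaFn_mem_eq_true_iff, sigmaFn_mem_eq_true_iff]
    tauto
  · rintro ⟨s, s', hagree, hne⟩
    cases hs : sigmaFn κ v s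
    · exact exists_waxp_not_waxp_erase_of_sigmaFn (fun j hj => (hagree j hj).symm)
        (by simpa [hs] using hne.symm) hs
    · exact exists_waxp_not_waxp_erase_of_sigmaFn hagree hs (by simpa [hs] using hne.symm)

theorem stmt5 {m : ℕ} (hm : 1 ≤ m) (κ : (Fin m → Bool) → Bool) (v : Fin m → Bool)
    (i : Fin m) :
    Relevant κ v i ↔
      ∃ s s' : Fin m → Bool, (∀ j : Fin m, j ≠ i → s j = s' j) ∧
        sigmaFn κ v s ≠ sigmaFn κ v s' :=
  stmt5_general κ v i
end

section
/- Minimal hitting set duality between abductive and contrastive explanations: a set X ⊆ F is an AXp if and only if X is a subset-minimal set that intersects every CXp; dually, a set Y ⊆ F is a CXp if and only if Y is a subset-minimal set that intersects every AXp. -/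
/-!
Weak AXps form an up-closed family `W` of feature sets, and `Y` is a weak CXp exactly when its
complement is not a weak AXp. For such a `W`, a set meets every `Y` with `¬ W Yᶜ` iff it
lies in `W` (if `X ∉ W`, then `Xᶜ` is such a `Y` missing `X`), and symmetrically. Since every
set in a family contains a minimal one, meeting all weak explanations is the same as meeting all
explanations, and taking minimal elements on both sides gives the duality.
-/

namespace Finset

variable {α : Type*} [DecidableEq α]

theorem forall_inter_nonempty_iff_forall_minimal (P : Finset α → Prop) (S : Finset α) :
    (∀ T, P T → (S ∩ T).Nonempty) ↔ ∀ T, (P T ∧ ∀ T' ⊂ T, ¬ P T') → (S ∩ T).Nonempty := by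
  refine ⟨fun h T hT => h T hT.1, fun h T hT => ?_⟩
  obtain ⟨T₀, hT₀T, hT₀⟩ := exists_minimal_le_of_wellFoundedLT P T hT
  exact (h T₀ (minimal_iff_forall_lt.mp hT₀)).mono (inter_subset_inter_left hT₀T)

end Finset

namespace Monotone

variable {α : Type*} [DecidableEq α] [Fintype α] {W : Finset α → Prop}

theorem iff_forall_inter_nonempty_of_not_compl (hW : Monotone W) (X : Finset α) :
    W X ↔ ∀ Y, ¬ W Yᶜ → (X ∩ Y).Nonempty := by
  refine ⟨fun hX Y hY => ?_, fun h => by_contra fun hX => ?_⟩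
  · rw [← Finset.not_disjoint_iff_nonempty_inter, ← Finset.subset_compl_iff_disjoint_right]
    exact fun hXY => hY (hW hXY hX)
  · simpa using h Xᶜ (by rwa [compl_compl])

theorem not_compl_iff_forall_inter_nonempty (hW : Monotone W) (Y : Finset α) :
    ¬ W Yᶜ ↔ ∀ X, W X → (Y ∩ X).Nonempty := by
  refine ⟨fun hY X hX => ?_, fun h hY => by simpa using h Yᶜ hY⟩
  rw [Finset.inter_comm]
  exact (hW.iff_forall_inter_nonempty_of_not_compl X).mp hX Y hY

end Monotone

section Explanations

variable {m : ℕ} (κ : (Fin m → Bool) → Bool) (v : Fin m → Bool)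

theorem waxp_monotone : Monotone (WAXp κ v) :=
  fun _ _ hST hS x hx => hS x fun i hi => hx i (hST hi)

theorem wcxp_iff_not_waxp_compl (Y : Finset (Fin m)) : WCXp κ v Y ↔ ¬ WAXp κ v Yᶜ := by
  simp [WCXp, WAXp, upsilon]

theorem waxp_iff_forall_cxp_inter_nonempty (X : Finset (Fin m)) :
    WAXp κ v X ↔ ∀ Y, CXp κ v Y → (X ∩ Y).Nonempty := by
  simp_rw [(waxp_monotone κ v).iff_forall_inter_nonempty_of_not_compl X,
    ← wcxp_iff_not_waxp_compl]
  exact Finset.forall_inter_nonempty_iff_forall_minimal _ X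

theorem wcxp_iff_forall_axp_inter_nonempty (Y : Finset (Fin m)) :
    WCXp κ v Y ↔ ∀ X, AXp κ v X → (Y ∩ X).Nonempty := by
  rw [wcxp_iff_not_waxp_compl, (waxp_monotone κ v).not_compl_iff_forall_inter_nonempty]
  exact Finset.forall_inter_nonempty_iff_forall_minimal _ Y

end Explanations

theorem stmt6_general {m : ℕ} (κ : (Fin m → Bool) → Bool) (v : Fin m → Bool) :
    (∀ X : Finset (Fin m), AXp κ v X ↔
      ((∀ Y : Finset (Fin m), CXp κ v Y → (X ∩ Y).Nonempty) ∧
       ∀ X' ⊂ X, ¬ (∀ Y : Finset (Fin m), CXp κ v Y → (X' ∩ Y).Nonempty))) ∧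
    (∀ Y : Finset (Fin m), CXp κ v Y ↔
      ((∀ X : Finset (Fin m), AXp κ v X → (Y ∩ X).Nonempty) ∧
       ∀ Y' ⊂ Y, ¬ (∀ X : Finset (Fin m), AXp κ v X → (Y' ∩ X).Nonempty))) := by
  have hW : WAXp κ v = fun X => ∀ Y, CXp κ v Y → (X ∩ Y).Nonempty :=
    funext fun X => propext (waxp_iff_forall_cxp_inter_nonempty κ v X)
  have hC : WCXp κ v = fun Y => ∀ X, AXp κ v X → (Y ∩ X).Nonempty :=
    funext fun Y => propext (wcxp_iff_forall_axp_inter_nonempty κ v Y)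
  exact ⟨fun X => by rw [AXp, hW], fun Y => by rw [CXp, hC]⟩

theorem stmt6 {m : ℕ} (hm : 1 ≤ m) (κ : (Fin m → Bool) → Bool) (v : Fin m → Bool) :
    (∀ X : Finset (Fin m), AXp κ v X ↔
      ((∀ Y : Finset (Fin m), CXp κ v Y → (X ∩ Y).Nonempty) ∧
       ∀ X' ⊂ X, ¬ (∀ Y : Finset (Fin m), CXp κ v Y → (X' ∩ Y).Nonempty))) ∧
    (∀ Y : Finset (Fin m), CXp κ v Y ↔
      ((∀ X : Finset (Fin m), AXp κ v X → (Y ∩ X).Nonempty) ∧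
       ∀ Y' ⊂ Y, ¬ (∀ X : Finset (Fin m), AXp κ v X → (Y' ∩ X).Nonempty))) :=
  stmt6_general κ v
end

section
/- A feature i ∈ F belongs to some AXp if and only if it belongs to some CXp; hence a feature is irrelevant if and only if it occurs neither in any AXp nor in any CXp. -/
/-!
Fixing `S` forces the prediction exactly when freeing `Sᶜ` cannot change it: `WAXp S ↔ ¬ WCXp Sᶜ`.
If `S` is an AXp containing `i`, then `S.erase i` is not sufficient, so `(S.erase i)ᶜ = insert i Sᶜ`
is a weak CXp and contains a CXp `T`. Were `i ∉ T`, then `T ⊆ Sᶜ` would be a weak CXp, contradicting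
the sufficiency of `S`. The converse is the same argument with the roles of the two notions swapped.
-/

section ComplementDuality

variable {α : Type*} [Fintype α] [DecidableEq α] {P Q : Finset α → Prop}

theorem monotone_of_iff_not_compl (hQ : Monotone Q) (hPQ : ∀ S, P S ↔ ¬ Q Sᶜ) : Monotone P :=
  fun S T hST hS => (hPQ T).mpr fun hT => (hPQ S).mp hS (hQ (Finset.compl_subset_compl.mpr hST) hT)

theorem iff_not_compl_symm (hPQ : ∀ S, P S ↔ ¬ Q Sᶜ) (S : Finset α) : Q S ↔ ¬ P Sᶜ := by
  rw [hPQ, compl_compl, not_not]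

theorem exists_minimal_mem_of_iff_not_compl (hQ : Monotone Q) (hPQ : ∀ S, P S ↔ ¬ Q Sᶜ) {i : α}
    (h : ∃ S, Minimal P S ∧ i ∈ S) : ∃ T, Minimal Q T ∧ i ∈ T := by
  obtain ⟨S, hS, hiS⟩ := h
  have hQ_erase : Q (S.erase i)ᶜ :=
    not_not.mp ((hPQ _).not.mp (hS.not_prop_of_lt (Finset.erase_ssubset hiS)))
  obtain ⟨T, hT_le, hT⟩ := exists_minimal_le_of_wellFoundedLT Q _ hQ_erase
  refine ⟨T, hT, by_contra fun hiT => (hPQ S).mp hS.prop (hQ ?_ hT.prop)⟩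
  rwa [Finset.compl_erase, Finset.subset_insert_iff_of_notMem hiT] at hT_le

theorem exists_minimal_mem_iff_of_iff_not_compl (hQ : Monotone Q) (hPQ : ∀ S, P S ↔ ¬ Q Sᶜ)
    (i : α) : (∃ S, Minimal P S ∧ i ∈ S) ↔ ∃ T, Minimal Q T ∧ i ∈ T :=
  ⟨exists_minimal_mem_of_iff_not_compl hQ hPQ,
    exists_minimal_mem_of_iff_not_compl (monotone_of_iff_not_compl hQ hPQ) (iff_not_compl_symm hPQ)⟩

end ComplementDuality

section Explanations

variable {m : ℕ} (κ : (Fin m → Bool) → Bool) (v : Fin m → Bool)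

theorem waxp_iff_not_wcxp_compl (S : Finset (Fin m)) : WAXp κ v S ↔ ¬ WCXp κ v Sᶜ := by
  simp [WAXp, WCXp, upsilon]

theorem wcxp_monotone : Monotone (WCXp κ v) :=
  fun _ _ hST ⟨x, hx, hne⟩ => ⟨x, fun i hi => hx i fun hiS => hi (hST hiS), hne⟩

theorem axp_iff_minimal (S : Finset (Fin m)) : AXp κ v S ↔ Minimal (WAXp κ v) S := by
  rw [minimal_iff_forall_lt]
  rfl

theorem cxp_iff_minimal (S : Finset (Fin m)) : CXp κ v S ↔ Minimal (WCXp κ v) S := by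
  rw [minimal_iff_forall_lt]
  rfl

theorem exists_axp_mem_iff_exists_cxp_mem (i : Fin m) :
    (∃ S, AXp κ v S ∧ i ∈ S) ↔ ∃ S, CXp κ v S ∧ i ∈ S := by
  simp only [axp_iff_minimal, cxp_iff_minimal]
  exact exists_minimal_mem_iff_of_iff_not_compl (wcxp_monotone κ v) (waxp_iff_not_wcxp_compl κ v) i

end Explanations

theorem stmt7_general {m : ℕ} (κ : (Fin m → Bool) → Bool) (v : Fin m → Bool)
    (i : Fin m) :
    ((∃ S, AXp κ v S ∧ i ∈ S) ↔ (∃ S, CXp κ v S ∧ i ∈ S)) ∧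
    (¬ Relevant κ v i ↔
      (¬ (∃ S, AXp κ v S ∧ i ∈ S) ∧ ¬ (∃ S, CXp κ v S ∧ i ∈ S))) := by
  have h := exists_axp_mem_iff_exists_cxp_mem κ v i
  exact ⟨h, fun hi => ⟨hi, mt h.mpr hi⟩, And.left⟩

theorem stmt7 {m : ℕ} (hm : 1 ≤ m) (κ : (Fin m → Bool) → Bool) (v : Fin m → Bool)
    (i : Fin m) :
    ((∃ S, AXp κ v S ∧ i ∈ S) ↔ (∃ S, CXp κ v S ∧ i ∈ S)) ∧
    (¬ Relevant κ v i ↔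
      (¬ (∃ S, AXp κ v S ∧ i ∈ S) ∧ ¬ (∃ S, CXp κ v S ∧ i ∈ S))) :=
  stmt7_general κ v i
end

section
/- Let m = 3, κ(x_1,x_2,x_3) = (x_1 ∧ x_2) ∨ (¬x_1 ∧ x_3), and v = (1,0,1), so c = κ(v) = 0. Then the Shapley value of feature 3 satisfies Sv(3) = 1/8; in particular Sv(3) ≠ 0 even though feature 3 belongs to no AXp (issue I1: an irrelevant feature receives nonzero Shapley importance). -/
/-- The classifier κ(x₁,x₂,x₃) = (x₁ ∧ x₂) ∨ (¬x₁ ∧ x₃) (features are 0-indexed). -/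
def kappa3 : (Fin 3 → Bool) → Bool := fun x => (x 0 && x 1) || (!(x 0) && x 2)

/-- The point v = (1,0,1). -/
def v101 : Fin 3 → Bool := ![true, false, true]

/-! The unique AXp of `kappa3` at `v101` is `{0, 1}`: flipping feature `0` or `1` of `v101` changes
the prediction, so every WAXp contains both, and fixing `x₀ = 1, x₁ = 0` already forces the
prediction `0`. Feature `2` is therefore irrelevant. Yet fixing `x₂ = 1` raises the average of
`kappa3` from `1/2` to `3/4` when nothing else is fixed, and from `1/4` to `1/2` once `x₁ = 0` is
fixed, so `Sv 2 = (1/3)(1/4) + (1/6)(1/4) = 1/8`. -/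

open Finset

section Explanations

variable {m : ℕ} {κ : (Fin m → Bool) → Bool} {v : Fin m → Bool}

theorem WAXp.mem_of_update_ne {S : Finset (Fin m)} {i : Fin m} {b : Bool}
    (hflip : κ (Function.update v i b) ≠ κ v) (hS : WAXp κ v S) : i ∈ S := by
  by_contra hi
  refine hflip (hS _ fun j hj => ?_)
  rw [Function.update_of_ne (ne_of_mem_of_not_mem hj hi)]

theorem AXp.eq_of_forall_WAXp_subset {S T : Finset (Fin m)} (hT : WAXp κ v T)
    (hmin : ∀ U, WAXp κ v U → T ⊆ U) (hS : AXp κ v S) : S = T := by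
  obtain ⟨hSw, hSmin⟩ := hS
  by_contra hne
  exact hSmin T (ssubset_of_subset_of_ne (hmin S hSw) (Ne.symm hne)) hT

end Explanations

theorem phi_eq_card_div {m : ℕ} (κ : (Fin m → Bool) → Bool) (v : Fin m → Bool)
    (S : Finset (Fin m)) :
    phi κ v S = #{x | (∀ i ∈ S, x i = v i) ∧ κ x = true} / 2 ^ (m - #S) := by
  rw [phi, sum_boole, filter_filter]
  ring

theorem Sv_fin_three_two (κ : (Fin 3 → Bool) → Bool) (v : Fin 3 → Bool) :
    Sv κ v 2 = (phi κ v {2} - phi κ v ∅) / 3 + (phi κ v {2, 0} - phi κ v {0}) / 6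
      + (phi κ v {2, 1} - phi κ v {1}) / 6 + (phi κ v {2, 0, 1} - phi κ v {0, 1}) / 3 := by
  rw [Sv, show (univ.erase (2 : Fin 3)).powerset = {∅, {0}, {1}, {0, 1}} by decide,
    sum_insert (by decide), sum_insert (by decide), sum_insert (by decide), sum_singleton]
  simp only [card_empty, card_singleton, show #({0, 1} : Finset (Fin 3)) = 2 by rfl]
  norm_num [Nat.factorial]
  ring

theorem AXp_kappa3_v101 {S : Finset (Fin 3)} (hS : AXp kappa3 v101 S) : S = {0, 1} := by
  refine hS.eq_of_forall_WAXp_subset (fun x hx => ?_) (fun U hU j hj => ?_)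
  · simp [kappa3, v101, hx 0 (by simp), hx 1 (by simp)]
  · simp only [mem_insert, mem_singleton] at hj
    rcases hj with rfl | rfl
    · exact hU.mem_of_update_ne (b := false) (by decide)
    · exact hU.mem_of_update_ne (b := true) (by decide)

theorem Sv_kappa3_v101_two : Sv kappa3 v101 2 = 1 / 8 := by
  have phi_eq {S : Finset (Fin 3)} (n k : ℕ)
      (hn : #{x | (∀ i ∈ S, x i = v101 i) ∧ kappa3 x = true} = n) (hk : 3 - #S = k) :
      phi kappa3 v101 S = n / 2 ^ k := by
    rw [phi_eq_card_div, hn, hk]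
  rw [Sv_fin_three_two, phi_eq (S := {2}) 3 2 (by decide) rfl, phi_eq (S := ∅) 4 3 (by decide) rfl,
    phi_eq (S := {2, 0}) 1 1 (by decide) rfl, phi_eq (S := {0}) 2 2 (by decide) rfl,
    phi_eq (S := {2, 1}) 1 1 (by decide) rfl, phi_eq (S := {1}) 1 2 (by decide) rfl,
    phi_eq (S := {2, 0, 1}) 0 0 (by decide) rfl, phi_eq (S := {0, 1}) 0 1 (by decide) rfl]
  norm_num

theorem stmt11 :
    kappa3 v101 = false ∧
    Sv kappa3 v101 2 = 1 / 8 ∧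
    Sv kappa3 v101 2 ≠ 0 ∧
    ¬ (∃ S, AXp kappa3 v101 S ∧ (2 : Fin 3) ∈ S) := by
  refine ⟨rfl, Sv_kappa3_v101_two, by norm_num [Sv_kappa3_v101_two], ?_⟩
  rintro ⟨S, hS, h2⟩
  rw [AXp_kappa3_v101 hS] at h2
  exact absurd h2 (by decide)
end

section
/- Let m = 3, κ(x_1,x_2,x_3) = (x_1 ∧ x_2) ∨ (¬x_1 ∧ x_3), and v = (1,1,1), so c = κ(v) = 1. Then the AXps for this instance are exactly {1,2} and {2,3}, so all three features are relevant, yet the Shapley value of feature 1 satisfies Sv(1) = 0 (issue I3: a relevant feature receives zero Shapley importance). -/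
/-- The point v = (1,1,1). -/
def v111 : Fin 3 → Bool := ![true, true, true]

open Finset

section Decidability

variable {m : ℕ} (κ : (Fin m → Bool) → Bool) (v : Fin m → Bool)

instance (S : Finset (Fin m)) : Decidable (WAXp κ v S) :=
  decidable_of_iff (∀ x : Fin m → Bool, (∀ i ∈ S, x i = v i) → κ x = κ v) Iff.rfl

instance (S : Finset (Fin m)) : Decidable (AXp κ v S) :=
  inferInstanceAs (Decidable (_ ∧ _))

instance (i : Fin m) : Decidable (Relevant κ v i) :=
  inferInstanceAs (Decidable (∃ _, _))

end Decidability

theorem Sv_fin_three_zero (κ : (Fin 3 → Bool) → Bool) (v : Fin 3 → Bool) :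
    Sv κ v 0 = (phi κ v {0} - phi κ v ∅) / 3 + (phi κ v {0, 1} - phi κ v {1}) / 6 +
      (phi κ v {0, 2} - phi κ v {2}) / 6 + (phi κ v {0, 1, 2} - phi κ v {1, 2}) / 3 := by
  have hpowerset : (univ.erase (0 : Fin 3)).powerset = {∅, {1}, {2}, {1, 2}} := by decide
  rw [Sv, hpowerset, sum_insert (by decide), sum_insert (by decide), sum_insert (by decide),
    sum_singleton]
  norm_num [Nat.factorial, card_pair (show (1 : Fin 3) ≠ 2 by decide)]
  ring

theorem kappa3_v111 : kappa3 v111 = true := rfl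

theorem AXp_kappa3_v111_iff (S : Finset (Fin 3)) :
    AXp kappa3 v111 S ↔ S = {0, 1} ∨ S = {1, 2} := by
  revert S
  decide

theorem relevant_kappa3_v111 (i : Fin 3) : Relevant kappa3 v111 i := by
  have h01 : AXp kappa3 v111 {0, 1} := (AXp_kappa3_v111_iff _).2 (.inl rfl)
  have h12 : AXp kappa3 v111 {1, 2} := (AXp_kappa3_v111_iff _).2 (.inr rfl)
  fin_cases i
  exacts [⟨_, h01, by decide⟩, ⟨_, h01, by decide⟩, ⟨_, h12, by decide⟩]

theorem phi_kappa3_v111_marginal :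
    phi kappa3 v111 {0} - phi kappa3 v111 ∅ = 0 ∧
    phi kappa3 v111 {0, 1} - phi kappa3 v111 {1} = 1 / 4 ∧
    phi kappa3 v111 {0, 2} - phi kappa3 v111 {2} = -1 / 4 ∧
    phi kappa3 v111 {0, 1, 2} - phi kappa3 v111 {1, 2} = 0 := by
  -- The elaborator's `decide` gets stuck on `Rat` arithmetic; the kernel evaluates it.
  decide +kernel

theorem stmt12 :
    kappa3 v111 = true ∧
    (∀ S : Finset (Fin 3), AXp kappa3 v111 S ↔ (S = {0, 1} ∨ S = {1, 2})) ∧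
    (∀ i : Fin 3, Relevant kappa3 v111 i) ∧
    Sv kappa3 v111 0 = 0 := by
  refine ⟨kappa3_v111, AXp_kappa3_v111_iff, relevant_kappa3_v111, ?_⟩
  obtain ⟨h0, h1, h2, h12⟩ := phi_kappa3_v111_marginal
  rw [Sv_fin_three_zero, h0, h1, h2, h12]
  norm_num
end

section
/- There exist m ≥ 1, a classifier κ : {0,1}^m → {0,1}, a point v ∈ {0,1}^m, and a feature i ∈ F such that i is relevant for the instance (v, κ(v)) and yet Sv(i) = 0 (existence of issue I3). -/
/-! The classifier below fires exactly on `(0,1,1)` and `(1,0,0)`, and `v = (1,1,1)` is classified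
`0`. Fixing features `0` and `1` to `1` excludes both positive points, while fixing either one
alone leaves one of them reachable, so `{0, 1}` is an AXp and feature `1` is relevant. In the
Shapley sum of feature `1`, fixing it lowers the average from `1/4` to `0` once feature `0` is
fixed and raises it from `1/4` to `1/2` once feature `2` is fixed; both coalitions have weight
`1/6`, and for `∅` and `{0, 2}` fixing feature `1` changes nothing, so `Sv 1 = 0`. -/

theorem Sv_fin_three_one (κ : (Fin 3 → Bool) → Bool) (v : Fin 3 → Bool) :
    Sv κ v 1 = (phi κ v {1} - phi κ v ∅) / 3 + (phi κ v {1, 0} - phi κ v {0}) / 6 +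
      (phi κ v {1, 2} - phi κ v {2}) / 6 + (phi κ v {1, 0, 2} - phi κ v {0, 2}) / 3 := by
  rw [Sv, show (Finset.univ.erase (1 : Fin 3)).powerset = {∅, {0}, {2}, {0, 2}} by decide,
    Finset.sum_insert (by decide), Finset.sum_insert (by decide), Finset.sum_insert (by decide),
    Finset.sum_singleton]
  norm_num [Nat.factorial, show ({0, 2} : Finset (Fin 3)).card = 2 from rfl]
  ring

def issueClassifier (x : Fin 3 → Bool) : Bool :=
  (!x 0 && x 1 && x 2) || (x 0 && !x 1 && !x 2)

theorem axp_issueClassifier : AXp issueClassifier (fun _ => true) {0, 1} := by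
  unfold AXp WAXp upsilon
  decide

local notation "φ₀" => phi issueClassifier (fun _ => true)

theorem Sv_issueClassifier_one : Sv issueClassifier (fun _ => true) 1 = 0 := by
  have h_empty : φ₀ {1} - φ₀ ∅ = 0 := by decide +kernel
  have h_zero : φ₀ {1, 0} - φ₀ {0} = -1 / 4 := by decide +kernel
  have h_two : φ₀ {1, 2} - φ₀ {2} = 1 / 4 := by decide +kernel
  have h_zero_two : φ₀ {1, 0, 2} - φ₀ {0, 2} = 0 := by decide +kernel
  rw [Sv_fin_three_one, h_empty, h_zero, h_two, h_zero_two]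
  norm_num

theorem stmt16 :
    ∃ (m : ℕ) (κ : (Fin m → Bool) → Bool) (v : Fin m → Bool) (i : Fin m),
      1 ≤ m ∧ Relevant κ v i ∧ Sv κ v i = 0 :=
  ⟨3, issueClassifier, fun _ => true, 1, by norm_num, ⟨{0, 1}, axp_issueClassifier, by decide⟩,
    Sv_issueClassifier_one⟩
end
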